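/- Relative error bound at a block Cauchy point: let z_k = P_{Ω_k}(x_k − α_k ∇m_k(x_k)) with Ω_k closed convex, α_k > 0. Then the projection of −g_k(z) onto the tangent cone T_{Ω_k}(z_k) satisfies ‖P_{T_{Ω_k}(z_k)}(−g_k(z))‖ ≤ ‖g_k(z) − g_k(x)‖ + ‖B(x)‖·‖z − x‖ + ‖z_k − x_k‖/α_k, where ∇m_k(x_k) = g_k(x) + [B(x)(z−x)]_k restricted to previously updated blocks. -/
import Mathlib


open RealInnerProductSpace

variable {E : Type*} [NormedAddCommGroup E] [InnerProductSpace ℝ E]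

/-- The polar cone of a set `K`. -/
def polarCone (K : Set E) : Set E := {v | ∀ x ∈ K, ⟪v, x⟫ ≤ 0}

/-- The normal cone to a convex set `Ω` at `x`. -/
def normalCone (Ω : Set E) (x : E) : Set E := {v | ∀ y ∈ Ω, ⟪v, y - x⟫ ≤ 0}

/-- The tangent cone to a convex set `Ω` at `x`, the polar of the normal cone. -/
def tangentCone' (Ω : Set E) (x : E) : Set E := polarCone (normalCone Ω x)

/-- `p` is the (nearest-point) projection of `z` onto `C`. -/
def IsProjOn (C : Set E) (z p : E) : Prop := p ∈ C ∧ ∀ w ∈ C, ‖z - p‖ ≤ ‖z - w‖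


lemma isProjOn_inner_le {C : Set E} (hC : Convex ℝ C) {z p : E} (h : IsProjOn C z p) :
    ∀ w ∈ C, ⟪z - p, w - p⟫ ≤ 0 := by
  haveI : Nonempty C := ⟨⟨p, h.1⟩⟩
  have heq : ‖z - p‖ = ⨅ w : C, ‖z - w‖ := by
    apply le_antisymm
    · exact le_ciInf fun w => h.2 w w.2
    · have hbdd : BddBelow (Set.range fun w : C => ‖z - w‖) :=
        ⟨0, by rintro r ⟨w, rfl⟩; exact norm_nonneg _⟩
      exact ciInf_le hbdd ⟨p, h.1⟩
  exact (norm_eq_iInf_iff_real_inner_le_zero hC h.1).mp heq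

lemma polarCone_convex (K : Set E) : Convex ℝ (polarCone K) := by
  intro v hv w hw a b ha hb _ x hx
  simp only [inner_add_left, real_inner_smul_left]
  nlinarith [hv x hx, hw x hx]

lemma zero_mem_polarCone (K : Set E) : (0 : E) ∈ polarCone K := by
  intro x hx; simp

lemma norm_proj_le_of_polar {C : Set E} (hC : Convex ℝ C) (h0 : (0:E) ∈ C)
    {a p v : E} (hp : IsProjOn C a p) (hv : ⟪v, p⟫ ≤ 0) : ‖p‖ ≤ ‖a - v‖ := by
  have h1 : ⟪a - p, (0:E) - p⟫ ≤ 0 := isProjOn_inner_le hC hp 0 h0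
  have h2 : ‖p‖ ^ 2 ≤ ⟪a - v, p⟫ := by
    have : ⟪a, p⟫ - ‖p‖^2 ≥ 0 := by
      have := h1
      simp only [zero_sub, inner_neg_right, inner_sub_left, real_inner_self_eq_norm_sq] at this
      linarith
    have hvp : ⟪a - v, p⟫ = ⟪a, p⟫ - ⟪v, p⟫ := inner_sub_left _ _ _
    linarith
  rcases eq_or_ne p 0 with hp0 | hp0
  · simp [hp0]
  · have := h2.trans (real_inner_le_norm (a - v) p)
    have hpn : 0 < ‖p‖ := norm_pos_iff.mpr hp0
    nlinarith

lemma piLp_apply_norm_le {ι : Type*} [Fintype ι] {β : ι → Type*}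
    [∀ i, NormedAddCommGroup (β i)] (f : PiLp 2 β) (i : ι) : ‖f i‖ ≤ ‖f‖ := by
  rw [PiLp.norm_eq_of_L2]
  have h1 : ‖f i‖ ^ 2 ≤ ∑ j, ‖f j‖ ^ 2 :=
    Finset.single_le_sum (f := fun j => ‖f j‖ ^ 2) (fun j _ => sq_nonneg _) (Finset.mem_univ i)
  calc ‖f i‖ = Real.sqrt (‖f i‖ ^ 2) := (Real.sqrt_sq (norm_nonneg _)).symm
    _ ≤ _ := Real.sqrt_le_sqrt h1

/-- Relative error bound at a block Cauchy point: the projection of minus the block gradient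
onto the tangent cone at the block Cauchy point is bounded by the gradient variation, the
model-Hessian term and the scaled step.  Here `u` is `x` with the blocks before `k` replaced by
the already-updated Cauchy blocks of `z`, and `d = g x + B (u - x)` is the block model
gradient `∇m_k(x_k)` (in block `k`). -/
theorem block_cauchy_relative_error_bound {K : ℕ} {n : Fin K → ℕ}
    (Ω : ∀ k, Set (EuclideanSpace ℝ (Fin (n k))))
    (hΩ_ne : ∀ k, (Ω k).Nonempty) (hΩ_closed : ∀ k, IsClosed (Ω k))
    (hΩ_convex : ∀ k, Convex ℝ (Ω k))
    (g : (PiLp 2 fun k => EuclideanSpace ℝ (Fin (n k))) →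
      PiLp 2 fun k => EuclideanSpace ℝ (Fin (n k)))
    (B : (PiLp 2 fun k => EuclideanSpace ℝ (Fin (n k))) →L[ℝ]
      PiLp 2 fun k => EuclideanSpace ℝ (Fin (n k)))
    (hB_symm : IsSelfAdjoint B)
    (x z : PiLp 2 fun k => EuclideanSpace ℝ (Fin (n k)))
    (hx : ∀ k, x k ∈ Ω k) (hz : ∀ k, z k ∈ Ω k)
    (α : Fin K → ℝ) (hα : ∀ k, 0 < α k)
    (k : Fin K)
    (u : PiLp 2 fun k => EuclideanSpace ℝ (Fin (n k)))
    (hu : ∀ j, u j = if j < k then z j else x j)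
    (d : PiLp 2 fun k => EuclideanSpace ℝ (Fin (n k)))
    (hd : d = g x + B (u - x))
    (hzk : IsProjOn (Ω k) (x k - α k • d k) (z k))
    (p : EuclideanSpace ℝ (Fin (n k)))
    (hp : IsProjOn (tangentCone' (Ω k) (z k)) (-(g z k)) p) :
    ‖p‖ ≤ ‖g z k - g x k‖ + ‖B‖ * ‖z - x‖ + ‖z k - x k‖ / α k := by
  set v : EuclideanSpace ℝ (Fin (n k)) := (α k)⁻¹ • ((x k - α k • d k) - z k) with hv
  have hvN : v ∈ normalCone (Ω k) (z k) := by
    intro y hy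
    have h0 := isProjOn_inner_le (hΩ_convex k) hzk y hy
    rw [hv, real_inner_smul_left]
    exact mul_nonpos_of_nonneg_of_nonpos (le_of_lt (inv_pos.mpr (hα k))) h0
  have hvp : ⟪v, p⟫ ≤ 0 := by
    have := hp.1 v hvN
    rwa [real_inner_comm] at this
  have hmain : ‖p‖ ≤ ‖-(g z k) - v‖ :=
    norm_proj_le_of_polar (polarCone_convex _) (zero_mem_polarCone _) hp hvp
  have hdk : d k = g x k + (B (u - x)) k := by rw [hd]; rfl
  have hkey : -(g z k) - v
      = (g x k - g z k) + (B (u - x)) k + (α k)⁻¹ • (z k - x k) := by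
    rw [hv, hdk, smul_sub, smul_sub, smul_smul, inv_mul_cancel₀ (hα k).ne', one_smul,
      smul_sub]
    abel
  rw [hkey] at hmain
  have htri : ‖(g x k - g z k) + (B (u - x)) k + (α k)⁻¹ • (z k - x k)‖
      ≤ ‖g x k - g z k‖ + ‖(B (u - x)) k‖ + ‖(α k)⁻¹ • (z k - x k)‖ :=
    norm_add₃_le
  have h2 : ‖(B (u - x)) k‖ ≤ ‖B‖ * ‖z - x‖ := by
    refine (piLp_apply_norm_le (B (u - x)) k).trans ((B.le_opNorm _).trans ?_)
    refine mul_le_mul_of_nonneg_left ?_ (norm_nonneg B)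
    rw [PiLp.norm_eq_of_L2, PiLp.norm_eq_of_L2]
    apply Real.sqrt_le_sqrt
    apply Finset.sum_le_sum
    intro j _
    have huj : (u - x) j = u j - x j := rfl
    have hzj : (z - x) j = z j - x j := rfl
    rw [huj, hzj, hu j]
    by_cases hjk : j < k
    · simp [hjk]
    · simp [hjk]
  have h3 : ‖(α k)⁻¹ • (z k - x k)‖ = ‖z k - x k‖ / α k := by
    rw [norm_smul, Real.norm_eq_abs, abs_of_pos (inv_pos.mpr (hα k)), div_eq_inv_mul]
  rw [h3] at htri
  have h1 : ‖g x k - g z k‖ = ‖g z k - g x k‖ := norm_sub_rev _ _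
  rw [h1] at htri
  refine hmain.trans (htri.trans ?_)
  gcongr
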